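/- arXiv:1508.07761 — 4 statements merged into one kernel-verified Lean document; each statement's English description precedes it below -/
import Mathlib

section
/- Let (ε_n)_{n≥2} be independent random variables with P(ε_n = a_n) = 1 - 1/n² and P(ε_n = c_n) = 1/n², where a_n = (1/n + 1/n³)/√(1 + 1/n² - 1/n⁴ - 1/n⁶) and c_n = (-n + 1/n³)/√(1 + 1/n² - 1/n⁴ - 1/n⁶). Then E ε_n = 0 and E ε_n² = 1 for all n ≥ 2, and the partial sums ∑_{i=2}^k ε_i converge to +∞ almost surely as k → ∞. -/
/-!
Each `ε n` has mean `0` and variance `1` by two polynomial identities in `1 / n`. Since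
`P(ε n ≠ a n) = 1 / n ^ 2` is summable, Borel–Cantelli gives `ε n = a n` for all large `n`
almost surely; as `a n ≥ 1 / (2 n)`, the partial sums then dominate a tail of the harmonic series.
-/

open MeasureTheory ProbabilityTheory Filter Finset

open scoped ENNReal

section Constants

variable {x : ℝ}

theorem one_div_sq_le_one (hx : 1 ≤ x) : 1 / x ^ 2 ≤ 1 := by
  rw [div_le_one (by positivity)]
  nlinarith

theorem one_add_one_div_sq_sub_one_div_pow_four_sub_one_div_pow_six_pos (hx : 1 < x) :
    0 < 1 + 1 / x ^ 2 - 1 / x ^ 4 - 1 / x ^ 6 := by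
  have hx0 : x ≠ 0 := by positivity
  have hfactor : 1 + 1 / x ^ 2 - 1 / x ^ 4 - 1 / x ^ 6 = (x ^ 2 - 1) * (x ^ 2 + 1) ^ 2 / x ^ 6 := by
    field_simp
    ring
  have : 0 < x ^ 2 - 1 := by nlinarith
  rw [hfactor]
  positivity

theorem two_point_mean_eq_zero (hx : x ≠ 0) :
    (1 - 1 / x ^ 2) * (1 / x + 1 / x ^ 3) + 1 / x ^ 2 * (-x + 1 / x ^ 3) = 0 := by
  field_simp
  ring

theorem two_point_second_moment_eq (hx : x ≠ 0) :
    (1 - 1 / x ^ 2) * (1 / x + 1 / x ^ 3) ^ 2 + 1 / x ^ 2 * (-x + 1 / x ^ 3) ^ 2 =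
      1 + 1 / x ^ 2 - 1 / x ^ 4 - 1 / x ^ 6 := by
  field_simp
  ring

theorem one_div_two_mul_le (hx : 1 < x) :
    1 / (2 * x) ≤ (1 / x + 1 / x ^ 3) / √(1 + 1 / x ^ 2 - 1 / x ^ 4 - 1 / x ^ 6) := by
  have hs : 0 < √(1 + 1 / x ^ 2 - 1 / x ^ 4 - 1 / x ^ 6) :=
    Real.sqrt_pos.2 (one_add_one_div_sq_sub_one_div_pow_four_sub_one_div_pow_six_pos hx)
  have hs2 : √(1 + 1 / x ^ 2 - 1 / x ^ 4 - 1 / x ^ 6) ≤ 2 := by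
    rw [Real.sqrt_le_left zero_le_two]
    have := one_div_sq_le_one hx.le
    have : 0 ≤ 1 / x ^ 4 := by positivity
    have : 0 ≤ 1 / x ^ 6 := by positivity
    linarith
  calc 1 / (2 * x) = (1 / x) / 2 := by ring
    _ ≤ (1 / x + 1 / x ^ 3) / √(1 + 1 / x ^ 2 - 1 / x ^ 4 - 1 / x ^ 6) := by
      gcongr ?_ / ?_
      exact le_add_of_nonneg_right (by positivity)

end Constants

section TwoPoint

variable {Ω : Type*} [MeasurableSpace Ω] {μ : Measure Ω}

theorem integral_two_point (f : ℝ → ℝ) {p q : ℝ≥0∞} (hp : p ≠ ∞) (hq : q ≠ ∞) (x y : ℝ) :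
    ∫ t, f t ∂(p • Measure.dirac x + q • Measure.dirac y) =
      p.toReal * f x + q.toReal * f y := by
  have hfx : Integrable f (Measure.dirac x) := integrable_dirac enorm_lt_top
  have hfy : Integrable f (Measure.dirac y) := integrable_dirac enorm_lt_top
  rw [integral_add_measure (hfx.smul_measure hp) (hfy.smul_measure hq), integral_smul_measure,
    integral_smul_measure, integral_dirac, integral_dirac, smul_eq_mul, smul_eq_mul]

theorem integral_comp_of_map_eq_two_point {X : Ω → ℝ} (hX : AEMeasurable X μ) {f : ℝ → ℝ}
    (hf : Measurable f) {p q : ℝ≥0∞} (hp : p ≠ ∞) (hq : q ≠ ∞) {x y : ℝ}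
    (hmap : μ.map X = p • Measure.dirac x + q • Measure.dirac y) :
    ∫ ω, f (X ω) ∂μ = p.toReal * f x + q.toReal * f y := by
  rw [← integral_map hX hf.aestronglyMeasurable, hmap, integral_two_point f hp hq]

theorem measure_ne_le_of_map_eq_two_point {X : Ω → ℝ} (hX : Measurable X) {p q : ℝ≥0∞}
    {x y : ℝ} (hmap : μ.map X = p • Measure.dirac x + q • Measure.dirac y) :
    μ {ω | X ω ≠ x} ≤ q := by
  calc μ {ω | X ω ≠ x} = μ.map X {x}ᶜ :=
        (Measure.map_apply hX (measurableSet_singleton x).compl).symm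
    _ = q * Measure.dirac y {x}ᶜ := by simp [hmap]
    _ ≤ q := mul_le_of_le_one_right' prob_le_one

theorem integral_eq_zero_and_integral_sq_eq_one_of_map_eq {X : Ω → ℝ} (hX : AEMeasurable X μ)
    {x : ℝ} (hx : 1 < x)
    (hmap : μ.map X =
      ENNReal.ofReal (1 - 1 / x ^ 2) •
          Measure.dirac ((1 / x + 1 / x ^ 3) / √(1 + 1 / x ^ 2 - 1 / x ^ 4 - 1 / x ^ 6)) +
        ENNReal.ofReal (1 / x ^ 2) •
          Measure.dirac ((-x + 1 / x ^ 3) / √(1 + 1 / x ^ 2 - 1 / x ^ 4 - 1 / x ^ 6))) :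
    ∫ ω, X ω ∂μ = 0 ∧ ∫ ω, X ω ^ 2 ∂μ = 1 := by
  have hx0 : x ≠ 0 := by positivity
  have hD := one_add_one_div_sq_sub_one_div_pow_four_sub_one_div_pow_six_pos hx
  have hp : (ENNReal.ofReal (1 - 1 / x ^ 2)).toReal = 1 - 1 / x ^ 2 :=
    ENNReal.toReal_ofReal (sub_nonneg.2 (one_div_sq_le_one hx.le))
  have hq : (ENNReal.ofReal (1 / x ^ 2)).toReal = 1 / x ^ 2 :=
    ENNReal.toReal_ofReal (by positivity)
  constructor
  · rw [integral_comp_of_map_eq_two_point (f := fun t => t) hX measurable_id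
      ENNReal.ofReal_ne_top ENNReal.ofReal_ne_top hmap, hp, hq, mul_div_assoc', mul_div_assoc',
      ← add_div, two_point_mean_eq_zero hx0, zero_div]
  · rw [integral_comp_of_map_eq_two_point (f := fun t => t ^ 2) hX (measurable_id.pow_const 2)
      ENNReal.ofReal_ne_top ENNReal.ofReal_ne_top hmap, hp, hq, div_pow, div_pow,
      Real.sq_sqrt hD.le, mul_div_assoc', mul_div_assoc', ← add_div,
      two_point_second_moment_eq hx0, div_self hD.ne']

theorem ae_eventually_eq_of_measure_ne_le {X : ℕ → Ω → ℝ} {a : ℕ → ℝ} {q : ℕ → ℝ≥0∞} (N : ℕ)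
    (hX : ∀ n, N ≤ n → μ {ω | X n ω ≠ a n} ≤ q n) (hq : ∑' n, q n ≠ ∞) :
    ∀ᵐ ω ∂μ, ∀ᶠ n in atTop, X n ω = a n := by
  have hbad : ∀ᵐ ω ∂μ, ∀ᶠ n in atTop, ω ∉ {ω | N ≤ n ∧ X n ω ≠ a n} := by
    refine ae_eventually_notMem (ne_top_of_le_ne_top hq (ENNReal.tsum_le_tsum fun n => ?_))
    by_cases hn : N ≤ n
    · simpa [hn] using hX n hn
    · simp [hn]
  filter_upwards [hbad] with ω hω
  filter_upwards [hω, eventually_ge_atTop N] with n hn hNn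
  simpa [hNn] using hn

end TwoPoint

theorem tsum_ofReal_one_div_sq_ne_top : ∑' n : ℕ, ENNReal.ofReal (1 / (n : ℝ) ^ 2) ≠ ∞ := by
  rw [← ENNReal.ofReal_tsum_of_nonneg (fun n => by positivity)
    (Real.summable_one_div_nat_pow.2 one_lt_two)]
  exact ENNReal.ofReal_ne_top

section PartialSums

variable {u v : ℕ → ℝ}

theorem tendsto_sum_range_atTop_of_eventually_le (huv : ∀ᶠ n in atTop, u n ≤ v n)
    (hu : Tendsto (fun k => ∑ i ∈ range k, u i) atTop atTop) :
    Tendsto (fun k => ∑ i ∈ range k, v i) atTop atTop := by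
  obtain ⟨N, hN⟩ := eventually_atTop.1 huv
  refine tendsto_atTop_mono' _ ?_
    (tendsto_atTop_add_const_left _ (∑ i ∈ range N, v i - ∑ i ∈ range N, u i) hu)
  filter_upwards [eventually_ge_atTop N] with k hk
  have : ∑ i ∈ Ico N k, u i ≤ ∑ i ∈ Ico N k, v i :=
    sum_le_sum fun i hi => hN i (mem_Ico.1 hi).1
  rw [← sum_range_add_sum_Ico u hk, ← sum_range_add_sum_Ico v hk]
  linarith

theorem tendsto_sum_Icc_atTop_of_tendsto_sum_range (m : ℕ)
    (hv : Tendsto (fun k => ∑ i ∈ range k, v i) atTop atTop) :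
    Tendsto (fun k => ∑ i ∈ Icc m k, v i) atTop atTop := by
  refine (tendsto_atTop_add_const_right _ (-∑ i ∈ range m, v i)
    (hv.comp (tendsto_add_atTop_nat 1))).congr' ?_
  filter_upwards [eventually_ge_atTop m] with k hk
  rw [Function.comp_apply, ← Ico_add_one_right_eq_Icc, sum_Ico_eq_sub _ (by omega)]
  ring

end PartialSums

theorem tendsto_sum_range_one_div_two_mul_atTop :
    Tendsto (fun k => ∑ i ∈ range k, 1 / (2 * (i : ℝ))) atTop atTop := by
  refine (not_summable_iff_tendsto_nat_atTop_of_nonneg fun i => by positivity).1 fun h => ?_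
  refine Real.not_summable_one_div_natCast ?_
  exact (h.mul_left 2).congr fun i => by simp only [one_div, mul_inv_rev]; ring

theorem stmt6_general {Ω : Type*} [MeasurableSpace Ω] (μ : Measure Ω)
    (ε : ℕ → Ω → ℝ)
    (hmeas : ∀ n, Measurable (ε n))
    (a c : ℕ → ℝ)
    (ha : ∀ n : ℕ, a n =
      (1 / (n : ℝ) + 1 / (n : ℝ) ^ 3) /
        Real.sqrt (1 + 1 / (n : ℝ) ^ 2 - 1 / (n : ℝ) ^ 4 - 1 / (n : ℝ) ^ 6))
    (hc : ∀ n : ℕ, c n =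
      (-(n : ℝ) + 1 / (n : ℝ) ^ 3) /
        Real.sqrt (1 + 1 / (n : ℝ) ^ 2 - 1 / (n : ℝ) ^ 4 - 1 / (n : ℝ) ^ 6))
    (hdist : ∀ n : ℕ, 2 ≤ n → μ.map (ε n) =
      ENNReal.ofReal (1 - 1 / (n : ℝ) ^ 2) • Measure.dirac (a n) +
        ENNReal.ofReal (1 / (n : ℝ) ^ 2) • Measure.dirac (c n)) :
    (∀ n : ℕ, 2 ≤ n → ∫ ω, ε n ω ∂μ = 0 ∧ ∫ ω, (ε n ω) ^ 2 ∂μ = 1) ∧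
    (∀ᵐ ω ∂μ, Tendsto (fun k => ∑ i ∈ Finset.Icc 2 k, ε i ω) atTop atTop) := by
  have one_lt_cast : ∀ n : ℕ, 2 ≤ n → (1 : ℝ) < n := fun n hn => by exact_mod_cast hn
  refine ⟨fun n hn => ?_, ?_⟩
  · refine integral_eq_zero_and_integral_sq_eq_one_of_map_eq (hmeas n).aemeasurable
      (one_lt_cast n hn) ?_
    rw [← ha, ← hc, hdist n hn]
  have hae : ∀ᵐ ω ∂μ, ∀ᶠ n in atTop, ε n ω = a n :=
    ae_eventually_eq_of_measure_ne_le 2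
      (fun n hn => measure_ne_le_of_map_eq_two_point (hmeas n) (hdist n hn))
      tsum_ofReal_one_div_sq_ne_top
  filter_upwards [hae] with ω hω
  refine tendsto_sum_Icc_atTop_of_tendsto_sum_range 2
    (tendsto_sum_range_atTop_of_eventually_le ?_ tendsto_sum_range_one_div_two_mul_atTop)
  filter_upwards [hω, eventually_ge_atTop 2] with n hn h2
  rw [hn, ha]
  exact one_div_two_mul_le (one_lt_cast n h2)

theorem stmt6 {Ω : Type*} [MeasurableSpace Ω] (μ : Measure Ω) [IsProbabilityMeasure μ]
    (ε : ℕ → Ω → ℝ)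
    (hmeas : ∀ n, Measurable (ε n))
    (hindep : iIndepFun ε μ)
    (a c : ℕ → ℝ)
    (ha : ∀ n : ℕ, a n =
      (1 / (n : ℝ) + 1 / (n : ℝ) ^ 3) /
        Real.sqrt (1 + 1 / (n : ℝ) ^ 2 - 1 / (n : ℝ) ^ 4 - 1 / (n : ℝ) ^ 6))
    (hc : ∀ n : ℕ, c n =
      (-(n : ℝ) + 1 / (n : ℝ) ^ 3) /
        Real.sqrt (1 + 1 / (n : ℝ) ^ 2 - 1 / (n : ℝ) ^ 4 - 1 / (n : ℝ) ^ 6))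
    (hdist : ∀ n : ℕ, 2 ≤ n → μ.map (ε n) =
      ENNReal.ofReal (1 - 1 / (n : ℝ) ^ 2) • Measure.dirac (a n) +
        ENNReal.ofReal (1 / (n : ℝ) ^ 2) • Measure.dirac (c n)) :
    (∀ n : ℕ, 2 ≤ n → ∫ ω, ε n ω ∂μ = 0 ∧ ∫ ω, (ε n ω) ^ 2 ∂μ = 1) ∧
    (∀ᵐ ω ∂μ, Tendsto (fun k => ∑ i ∈ Finset.Icc 2 k, ε i ω) atTop atTop) :=
  stmt6_general μ ε hmeas a c ha hc hdist
end

section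
/- If there exists a probability measure Q equivalent to P with dQ/dP ∈ L²(P) and E_Q(ε_i - b_i) = 0 for all i ≥ 1, then ∑_{i=1}^∞ b_i² < ∞. -/
open MeasureTheory ProbabilityTheory Filter

/-!
Under `P` the `ε i` form an orthonormal family in `L²(P)`, and `b i = E_Q ε i = ⟪ε i, dQ/dP⟫`.
Since `dQ/dP ∈ L²(P)`, Bessel's inequality gives `∑ b i ^ 2 ≤ ‖dQ/dP‖² < ∞`.
-/

section

variable {Ω : Type*} [MeasurableSpace Ω] {μ : Measure Ω}

lemma MeasureTheory.MemLp.inner_toLp_eq_integral_mul {f g : Ω → ℝ} (hf : MemLp f 2 μ)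
    (hg : MemLp g 2 μ) : inner ℝ (hf.toLp f) (hg.toLp g) = ∫ ω, f ω * g ω ∂μ := by
  rw [L2.inner_def]
  refine integral_congr_ae ?_
  filter_upwards [hf.coeFn_toLp, hg.coeFn_toLp] with ω hfω hgω
  simp [hfω, hgω, mul_comm]

lemma orthonormal_toLp_of_indepFun {ι : Type*} {ε : ι → Ω → ℝ}
    (hindep : Pairwise fun i j => IndepFun (ε i) (ε j) μ) (hL2 : ∀ i, MemLp (ε i) 2 μ)
    (hmean : ∀ i, ∫ ω, ε i ω ∂μ = 0) (hvar : ∀ i, ∫ ω, ε i ω ^ 2 ∂μ = 1) :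
    Orthonormal ℝ fun i => (hL2 i).toLp (ε i) := by
  classical
  rw [orthonormal_iff_ite]
  intro i j
  rw [(hL2 i).inner_toLp_eq_integral_mul (hL2 j)]
  split_ifs with hij
  · subst hij
    simpa only [sq] using hvar i
  · have := (hindep hij).integral_mul_eq_mul_integral (hL2 i).aestronglyMeasurable
      (hL2 j).aestronglyMeasurable
    simpa [hmean i, hmean j] using this

variable {ν : Measure Ω} [SigmaFinite ν] [SigmaFinite μ]

lemma integrable_of_memLp_two_of_rnDeriv_memLp_two (hνμ : ν ≪ μ) {f : Ω → ℝ}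
    (hf : MemLp f 2 μ) (hdens : MemLp (fun ω => (ν.rnDeriv μ ω).toReal) 2 μ) :
    Integrable f ν :=
  (integrable_toReal_rnDeriv_mul_iff hνμ).1 (hdens.integrable_mul hf)

lemma inner_toLp_rnDeriv_eq_integral (hνμ : ν ≪ μ) {f : Ω → ℝ} (hf : MemLp f 2 μ)
    (hdens : MemLp (fun ω => (ν.rnDeriv μ ω).toReal) 2 μ) :
    inner ℝ (hf.toLp f) (hdens.toLp _) = ∫ ω, f ω ∂ν := by
  rw [hf.inner_toLp_eq_integral_mul hdens, ← integral_toReal_rnDeriv_mul hνμ]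
  simp only [mul_comm]

end

theorem stmt10_general {Ω : Type*} [MeasurableSpace Ω] (μ : Measure Ω) [IsProbabilityMeasure μ]
    (ε : ℕ → Ω → ℝ) (b : ℕ → ℝ)
    (hindep : iIndepFun ε μ)
    (hL2 : ∀ i, MemLp (ε i) 2 μ)
    (hmean : ∀ i, ∫ ω, ε i ω ∂μ = 0)
    (hvar : ∀ i, ∫ ω, (ε i ω) ^ 2 ∂μ = 1)
    (Q : Measure Ω) [IsProbabilityMeasure Q] (hQP : Q ≪ μ)
    (hdens : MemLp (fun ω => (Q.rnDeriv μ ω).toReal) 2 μ)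
    (hQε : ∀ i, ∫ ω, (ε i ω - b i) ∂Q = 0) :
    Summable (fun i => (b i) ^ 2) := by
  have hON := orthonormal_toLp_of_indepFun (fun i j hij => hindep.indepFun hij) hL2 hmean hvar
  have hb : ∀ i, inner ℝ ((hL2 i).toLp (ε i)) (hdens.toLp _) = b i := fun i => by
    have hint := integrable_of_memLp_two_of_rnDeriv_memLp_two hQP (hL2 i) hdens
    rw [inner_toLp_rnDeriv_eq_integral hQP (hL2 i) hdens]
    simpa [integral_sub hint (integrable_const (b i)), sub_eq_zero] using hQε i
  simpa only [hb, Real.norm_eq_abs, sq_abs] using hON.inner_products_summable (hdens.toLp _)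

theorem stmt10 {Ω : Type*} [MeasurableSpace Ω] (μ : Measure Ω) [IsProbabilityMeasure μ]
    (ε : ℕ → Ω → ℝ) (b : ℕ → ℝ)
    (hmeas : ∀ i, Measurable (ε i))
    (hindep : iIndepFun ε μ)
    (hL2 : ∀ i, MemLp (ε i) 2 μ)
    (hmean : ∀ i, ∫ ω, ε i ω ∂μ = 0)
    (hvar : ∀ i, ∫ ω, (ε i ω) ^ 2 ∂μ = 1)
    (Q : Measure Ω) [IsProbabilityMeasure Q] (hQP : Q ≪ μ) (hPQ : μ ≪ Q)
    (hdens : MemLp (fun ω => (Q.rnDeriv μ ω).toReal) 2 μ)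
    (hQε : ∀ i, ∫ ω, (ε i ω - b i) ∂Q = 0) :
    Summable (fun i => (b i) ^ 2) :=
  stmt10_general μ ε b hindep hL2 hmean hvar Q hQP hdens hQε
end

section
/- If ∑_{i=1}^∞ b_i² = ∞ then there is asymptotic arbitrage: there exists a sequence of finitely supported strategies φ(k) such that E V(φ(k)) → ∞ and var(V(φ(k))) → 0, where V(φ) = ∑_i φ_i(ε_i - b_i). Conversely, if ∑_i b_i² < ∞ then no such sequence exists. -/
open MeasureTheory Filter Finset Topology

/-!
For a strategy supported on `s`, orthonormality of the `ε i` gives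
`E V(φ) = -∑ φ_i b_i` and `var V(φ) = ∑ φ_i²`. If `∑ b_i² = ∞`, betting `-c b_i` on the first `k`
assets with `S_k = ∑_{i<k} b_i²` and `c = S_k^(-3/4)` gives mean `S_k^(1/4) → ∞` and variance
`S_k^(-1/2) → 0`. If `∑ b_i² = B < ∞`, Cauchy–Schwarz gives `(E V(φ))² ≤ B · var V(φ)`, so the
mean cannot diverge while the variance vanishes.
-/

noncomputable def portfolioValue {Ω : Type*} (ε : ℕ → Ω → ℝ) (b φ : ℕ → ℝ) (ω : Ω) : ℝ :=
  ∑' i, φ i * (ε i ω - b i)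

def HasAsymptoticArbitrage {Ω : Type*} [MeasurableSpace Ω] (μ : Measure Ω)
    (ε : ℕ → Ω → ℝ) (b : ℕ → ℝ) : Prop :=
  ∃ ψ : ℕ → ℕ → ℝ, (∀ k, (Function.support (ψ k)).Finite) ∧
    Tendsto (fun k => ∫ ω, portfolioValue ε b (ψ k) ω ∂μ) atTop atTop ∧
    Tendsto (fun k => ∫ ω, (portfolioValue ε b (ψ k) ω -
      ∫ ω', portfolioValue ε b (ψ k) ω' ∂μ) ^ 2 ∂μ) atTop (𝓝 0)

section Moments

variable {Ω : Type*} {ε : ℕ → Ω → ℝ} {b φ : ℕ → ℝ} {s : Finset ℕ}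

lemma portfolioValue_eq_sum (hφ : ∀ i ∉ s, φ i = 0) (ω : Ω) :
    portfolioValue ε b φ ω = ∑ i ∈ s, φ i * (ε i ω - b i) :=
  tsum_eq_sum fun i hi => by rw [hφ i hi, zero_mul]

variable [MeasurableSpace Ω] {μ : Measure Ω}

lemma integral_portfolioValue [IsProbabilityMeasure μ] (hint : ∀ i, Integrable (ε i) μ)
    (hmean : ∀ i, ∫ ω, ε i ω ∂μ = 0) (hφ : ∀ i ∉ s, φ i = 0) :
    ∫ ω, portfolioValue ε b φ ω ∂μ = -∑ i ∈ s, φ i * b i := by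
  simp_rw [portfolioValue_eq_sum hφ, ← sum_neg_distrib]
  rw [integral_finsetSum s fun i _ => show Integrable (fun ω => φ i * (ε i ω - b i)) μ from
    ((hint i).sub (integrable_const (b i))).const_mul (φ i)]
  refine sum_congr rfl fun i _ => ?_
  rw [integral_const_mul, integral_sub (hint i) (integrable_const _), hmean i]
  simp

lemma portfolioValue_sub_integral [IsProbabilityMeasure μ] (hint : ∀ i, Integrable (ε i) μ)
    (hmean : ∀ i, ∫ ω, ε i ω ∂μ = 0) (hφ : ∀ i ∉ s, φ i = 0) (ω : Ω) :
    portfolioValue ε b φ ω - ∫ ω', portfolioValue ε b φ ω' ∂μ = ∑ i ∈ s, φ i * ε i ω := by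
  rw [integral_portfolioValue hint hmean hφ, portfolioValue_eq_sum hφ, sub_neg_eq_add,
    ← sum_add_distrib]
  exact sum_congr rfl fun i _ => by ring

lemma integral_sq_sum_mul_of_orthonormal (hL2 : ∀ i, MemLp (ε i) 2 μ)
    (hvar : ∀ i, ∫ ω, ε i ω ^ 2 ∂μ = 1)
    (huncorr : ∀ i j, i ≠ j → ∫ ω, ε i ω * ε j ω ∂μ = 0) (c : ℕ → ℝ) (s : Finset ℕ) :
    ∫ ω, (∑ i ∈ s, c i * ε i ω) ^ 2 ∂μ = ∑ i ∈ s, c i ^ 2 := by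
  have hprod : ∀ i j, Integrable (fun ω => c i * ε i ω * (c j * ε j ω)) μ := fun i j =>
    ((hL2 i).const_mul (c i)).integrable_mul ((hL2 j).const_mul (c j))
  have hdiag : ∀ i, ∫ ω, ε i ω * ε i ω ∂μ = 1 := fun i => by simpa only [sq] using hvar i
  simp_rw [sq, sum_mul_sum]
  rw [integral_finsetSum s fun i _ => integrable_finsetSum s fun j _ => hprod i j]
  refine sum_congr rfl fun i hi => ?_
  rw [integral_finsetSum s fun j _ => hprod i j, sum_eq_single_of_mem i hi]
  · rw [← mul_one (c i * c i), ← hdiag i, ← integral_const_mul]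
    exact integral_congr_ae (ae_of_all _ fun ω => by ring)
  · intro j _ hji
    rw [← mul_zero (c i * c j), ← huncorr i j hji.symm, ← integral_const_mul]
    exact integral_congr_ae (ae_of_all _ fun ω => by ring)

lemma integral_sq_portfolioValue_sub_integral [IsProbabilityMeasure μ]
    (hL2 : ∀ i, MemLp (ε i) 2 μ) (hmean : ∀ i, ∫ ω, ε i ω ∂μ = 0)
    (hvar : ∀ i, ∫ ω, ε i ω ^ 2 ∂μ = 1)
    (huncorr : ∀ i j, i ≠ j → ∫ ω, ε i ω * ε j ω ∂μ = 0) (hφ : ∀ i ∉ s, φ i = 0) :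
    ∫ ω, (portfolioValue ε b φ ω - ∫ ω', portfolioValue ε b φ ω' ∂μ) ^ 2 ∂μ =
      ∑ i ∈ s, φ i ^ 2 := by
  simp_rw [portfolioValue_sub_integral (fun i => (hL2 i).integrable one_le_two) hmean hφ]
  exact integral_sq_sum_mul_of_orthonormal hL2 hvar huncorr φ s

end Moments

lemma tendsto_mul_rpow_atTop {a : ℝ} (ha : -1 < a) :
    Tendsto (fun x : ℝ => x * x ^ a) atTop atTop := by
  refine (tendsto_rpow_atTop (by linarith : 0 < a + 1)).congr' ?_
  filter_upwards [eventually_gt_atTop 0] with x hx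
  rw [Real.rpow_add_one hx.ne', mul_comm]

lemma tendsto_mul_rpow_sq_nhds_zero {a : ℝ} (ha : a < -1 / 2) :
    Tendsto (fun x : ℝ => x * (x ^ a) ^ 2) atTop (𝓝 0) := by
  refine (tendsto_rpow_neg_atTop (by linarith : 0 < -(2 * a + 1))).congr' ?_
  filter_upwards [eventually_gt_atTop 0] with x hx
  rw [neg_neg, ← Real.rpow_mul_natCast hx.le, Real.rpow_add_one hx.ne', mul_comm]
  norm_num [mul_comm]

section Arbitrage

variable {Ω : Type*} [MeasurableSpace Ω] {μ : Measure Ω} [IsProbabilityMeasure μ]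
  {ε : ℕ → Ω → ℝ} {b : ℕ → ℝ}

lemma hasAsymptoticArbitrage_of_not_summable (hL2 : ∀ i, MemLp (ε i) 2 μ)
    (hmean : ∀ i, ∫ ω, ε i ω ∂μ = 0) (hvar : ∀ i, ∫ ω, ε i ω ^ 2 ∂μ = 1)
    (huncorr : ∀ i j, i ≠ j → ∫ ω, ε i ω * ε j ω ∂μ = 0)
    (hb : ¬Summable fun i => b i ^ 2) :
    HasAsymptoticArbitrage μ ε b := by
  set S : ℕ → ℝ := fun k => ∑ i ∈ range k, b i ^ 2
  have hS : Tendsto S atTop atTop :=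
    (not_summable_iff_tendsto_nat_atTop_of_nonneg fun i => sq_nonneg (b i)).mp hb
  set c : ℕ → ℝ := fun k => S k ^ (-(3 / 4) : ℝ)
  set ψ : ℕ → ℕ → ℝ := fun k i => if i ∈ range k then -(c k * b i) else 0
  have hψ : ∀ k, ∀ i ∉ range k, ψ k i = 0 := fun k i hi => if_neg hi
  refine ⟨ψ, fun k => (range k).finite_toSet.subset fun i hi => by_contra fun h => hi (hψ k i h),
    ?_, ?_⟩
  · have hmeanψ : ∀ k, ∫ ω, portfolioValue ε b (ψ k) ω ∂μ = S k * c k := fun k => by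
      rw [integral_portfolioValue (fun i => (hL2 i).integrable one_le_two) hmean (hψ k),
        ← sum_neg_distrib, sum_mul]
      exact sum_congr rfl fun i hi => by simp only [ψ, if_pos hi]; ring
    simp_rw [hmeanψ]
    exact (tendsto_mul_rpow_atTop (by norm_num)).comp hS
  · have hvarψ : ∀ k, ∫ ω, (portfolioValue ε b (ψ k) ω -
        ∫ ω', portfolioValue ε b (ψ k) ω' ∂μ) ^ 2 ∂μ = S k * c k ^ 2 := fun k => by
      rw [integral_sq_portfolioValue_sub_integral hL2 hmean hvar huncorr (hψ k), sum_mul]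
      exact sum_congr rfl fun i hi => by simp only [ψ, if_pos hi]; ring
    simp_rw [hvarψ]
    exact (tendsto_mul_rpow_sq_nhds_zero (by norm_num)).comp hS

lemma sq_integral_portfolioValue_le (hL2 : ∀ i, MemLp (ε i) 2 μ)
    (hmean : ∀ i, ∫ ω, ε i ω ∂μ = 0) (hvar : ∀ i, ∫ ω, ε i ω ^ 2 ∂μ = 1)
    (huncorr : ∀ i j, i ≠ j → ∫ ω, ε i ω * ε j ω ∂μ = 0)
    (hb : Summable fun i => b i ^ 2) {φ : ℕ → ℝ} (hφ : φ.support.Finite) :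
    (∫ ω, portfolioValue ε b φ ω ∂μ) ^ 2 ≤
      (∫ ω, (portfolioValue ε b φ ω - ∫ ω', portfolioValue ε b φ ω' ∂μ) ^ 2 ∂μ) *
        ∑' i, b i ^ 2 := by
  set s := hφ.toFinset
  have hs : ∀ i ∉ s, φ i = 0 := fun i hi => Function.notMem_support.mp (mt hφ.mem_toFinset.mpr hi)
  rw [integral_sq_portfolioValue_sub_integral hL2 hmean hvar huncorr hs,
    integral_portfolioValue (fun i => (hL2 i).integrable one_le_two) hmean hs, neg_sq]
  calc (∑ i ∈ s, φ i * b i) ^ 2 ≤ (∑ i ∈ s, φ i ^ 2) * ∑ i ∈ s, b i ^ 2 :=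
        sum_mul_sq_le_sq_mul_sq s φ b
    _ ≤ (∑ i ∈ s, φ i ^ 2) * ∑' i, b i ^ 2 :=
        mul_le_mul_of_nonneg_left (hb.sum_le_tsum s fun i _ => sq_nonneg (b i))
          (sum_nonneg fun i _ => sq_nonneg (φ i))

lemma not_hasAsymptoticArbitrage_of_summable (hL2 : ∀ i, MemLp (ε i) 2 μ)
    (hmean : ∀ i, ∫ ω, ε i ω ∂μ = 0) (hvar : ∀ i, ∫ ω, ε i ω ^ 2 ∂μ = 1)
    (huncorr : ∀ i j, i ≠ j → ∫ ω, ε i ω * ε j ω ∂μ = 0)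
    (hb : Summable fun i => b i ^ 2) :
    ¬HasAsymptoticArbitrage μ ε b := by
  rintro ⟨ψ, hfin, hmean_top, hvar_zero⟩
  have hsq_zero : Tendsto (fun k => (∫ ω, portfolioValue ε b (ψ k) ω ∂μ) ^ 2) atTop (𝓝 0) :=
    squeeze_zero (fun k => sq_nonneg _)
      (fun k => sq_integral_portfolioValue_le hL2 hmean hvar huncorr hb (hfin k))
      (by simpa using hvar_zero.mul_const (∑' i, b i ^ 2))
  have hsq_top : Tendsto (fun k => (∫ ω, portfolioValue ε b (ψ k) ω ∂μ) ^ 2) atTop atTop :=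
    (tendsto_pow_atTop two_ne_zero).comp hmean_top
  exact not_tendsto_nhds_of_tendsto_atTop hsq_top 0 hsq_zero

end Arbitrage

theorem stmt11_general {Ω : Type*} [MeasurableSpace Ω] (μ : Measure Ω) [IsProbabilityMeasure μ]
    (ε : ℕ → Ω → ℝ) (b : ℕ → ℝ)
    (hL2 : ∀ i, MemLp (ε i) 2 μ)
    (hmean : ∀ i, ∫ ω, ε i ω ∂μ = 0)
    (hvar : ∀ i, ∫ ω, (ε i ω) ^ 2 ∂μ = 1)
    (huncorr : ∀ i j, i ≠ j → ∫ ω, ε i ω * ε j ω ∂μ = 0) :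
    (¬ Summable (fun i => (b i) ^ 2) →
      ∃ ψ : ℕ → ℕ → ℝ, (∀ k, (Function.support (ψ k)).Finite) ∧
        Tendsto (fun k => ∫ ω, (∑' i, ψ k i * (ε i ω - b i)) ∂μ) atTop atTop ∧
        Tendsto
          (fun k => ∫ ω, ((∑' i, ψ k i * (ε i ω - b i)) -
            ∫ ω', (∑' i, ψ k i * (ε i ω' - b i)) ∂μ) ^ 2 ∂μ)
          atTop (nhds 0)) ∧
    (Summable (fun i => (b i) ^ 2) →
      ¬ ∃ ψ : ℕ → ℕ → ℝ, (∀ k, (Function.support (ψ k)).Finite) ∧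
        Tendsto (fun k => ∫ ω, (∑' i, ψ k i * (ε i ω - b i)) ∂μ) atTop atTop ∧
        Tendsto
          (fun k => ∫ ω, ((∑' i, ψ k i * (ε i ω - b i)) -
            ∫ ω', (∑' i, ψ k i * (ε i ω' - b i)) ∂μ) ^ 2 ∂μ)
          atTop (nhds 0)) :=
  ⟨hasAsymptoticArbitrage_of_not_summable hL2 hmean hvar huncorr,
    not_hasAsymptoticArbitrage_of_summable hL2 hmean hvar huncorr⟩

theorem stmt11 {Ω : Type*} [MeasurableSpace Ω] (μ : Measure Ω) [IsProbabilityMeasure μ]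
    (ε : ℕ → Ω → ℝ) (b : ℕ → ℝ)
    (hmeas : ∀ i, Measurable (ε i))
    (hL2 : ∀ i, MemLp (ε i) 2 μ)
    (hmean : ∀ i, ∫ ω, ε i ω ∂μ = 0)
    (hvar : ∀ i, ∫ ω, (ε i ω) ^ 2 ∂μ = 1)
    (huncorr : ∀ i j, i ≠ j → ∫ ω, ε i ω * ε j ω ∂μ = 0) :
    (¬ Summable (fun i => (b i) ^ 2) →
      ∃ ψ : ℕ → ℕ → ℝ, (∀ k, (Function.support (ψ k)).Finite) ∧
        Tendsto (fun k => ∫ ω, (∑' i, ψ k i * (ε i ω - b i)) ∂μ) atTop atTop ∧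
        Tendsto
          (fun k => ∫ ω, ((∑' i, ψ k i * (ε i ω - b i)) -
            ∫ ω', (∑' i, ψ k i * (ε i ω' - b i)) ∂μ) ^ 2 ∂μ)
          atTop (nhds 0)) ∧
    (Summable (fun i => (b i) ^ 2) →
      ¬ ∃ ψ : ℕ → ℕ → ℝ, (∀ k, (Function.support (ψ k)).Finite) ∧
        Tendsto (fun k => ∫ ω, (∑' i, ψ k i * (ε i ω - b i)) ∂μ) atTop atTop ∧
        Tendsto
          (fun k => ∫ ω, ((∑' i, ψ k i * (ε i ω - b i)) -
            ∫ ω', (∑' i, ψ k i * (ε i ω' - b i)) ∂μ) ^ 2 ∂μ)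
          atTop (nhds 0)) :=
  stmt11_general μ ε b hL2 hmean hvar huncorr
end

section
/- Let 0 ≤ α < 1 and let u : ℝ → ℝ be concave, non-decreasing, not constant, with u(0)=0, and u(x) ≤ C₁(x^α + 1) for x ≥ 0. Suppose Q ∼ P is a probability with dQ/dP ∈ L^∞, dP/dQ ∈ L^{α/(1-α)}(P), and E_Q V(φ) = 0 for all admissible φ. Then there exist finite constants C₄ such that for every admissible φ with E u⁻(V(φ)) < ∞: E u⁺(V(φ)) ≤ C₄ (E u⁻(V(φ)))^α + C₄. -/
/-! Concavity and non-constancy of `u` put a line of positive slope above `u` on the negative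
half-line, so `V⁻ ≤ a (u⁻(V) + 1)`, while the growth bound gives `u⁺(V) ≤ C₁ ((V⁺)^α + 1)`.
Hölder's inequality against the density `dP/dQ` bounds `E (V⁺)^α` by a multiple of
`(E_Q V⁺)^α`; since `E_Q V = 0` this is `(E_Q V⁻)^α`, and the bounded density `dQ/dP` turns
`E_Q V⁻` into a multiple of `E u⁻(V) + 1`. Subadditivity of `t ↦ t^α` finishes. -/

open MeasureTheory
open scoped ENNReal

theorem ConcaveOn.neg_le_slope_mul_negPart_sub {u : ℝ → ℝ} (hconc : ConcaveOn ℝ Set.univ u)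
    {p q : ℝ} (hpq : p < q) (hup : u p < u q) (hp : u p ≤ 0) (x : ℝ) :
    -x ≤ (q - p) / (u q - u p) * max (-u x) 0 - p := by
  have hs : 0 ≤ (q - p) / (u q - u p) := div_nonneg (sub_pos.2 hpq).le (sub_pos.2 hup).le
  rcases lt_or_ge x p with hxp | hpx
  · have hslope := hconc.slope_anti_adjacent trivial trivial hxp hpq
    rw [div_le_div_iff₀ (sub_pos.2 hpq) (sub_pos.2 hxp)] at hslope
    have hchord : p - x ≤ (q - p) / (u q - u p) * (u p - u x) := by
      rw [div_mul_eq_mul_div, le_div_iff₀ (sub_pos.2 hup)]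
      linarith
    have : u p - u x ≤ max (-u x) 0 := by linarith [le_max_left (-u x) 0]
    nlinarith [mul_le_mul_of_nonneg_left this hs]
  · nlinarith [mul_nonneg hs (le_max_right (-u x) 0)]

theorem ConcaveOn.exists_neg_le_mul_negPart_add_one {u : ℝ → ℝ} (hconc : ConcaveOn ℝ Set.univ u)
    (hmono : Monotone u) (hnc : ¬ ∃ k : ℝ, ∀ x : ℝ, u x = k) (hu0 : u 0 = 0) :
    ∃ a : ℝ, 0 ≤ a ∧ ∀ x : ℝ, -x ≤ a * (max (-u x) 0 + 1) := by
  obtain ⟨p, q, hup, hp, hp0⟩ : ∃ p q : ℝ, u p < u q ∧ u p ≤ 0 ∧ p ≤ 0 := by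
    simp only [not_exists, not_forall] at hnc
    obtain ⟨x₀, hx₀⟩ := hnc 0
    rcases lt_or_gt_of_ne hx₀ with h | h
    · exact ⟨x₀, 0, by rwa [hu0], h.le, (hmono.reflect_lt (h.trans_eq hu0.symm)).le⟩
    · exact ⟨0, x₀, by rwa [hu0], hu0.le, le_rfl⟩
  have hpq := hmono.reflect_lt hup
  have hs : 0 ≤ (q - p) / (u q - u p) := div_nonneg (sub_pos.2 hpq).le (sub_pos.2 hup).le
  refine ⟨(q - p) / (u q - u p) - p, by linarith, fun x => ?_⟩
  have := hconc.neg_le_slope_mul_negPart_sub hpq hup hp x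
  nlinarith [mul_nonneg (neg_nonneg.2 hp0) (le_max_right (-u x) 0)]

theorem ofReal_max_le_of_growth {u : ℝ → ℝ} (hmono : Monotone u) (hu0 : u 0 = 0) {α C : ℝ}
    (hα0 : 0 ≤ α) (hgrowth : ∀ x : ℝ, 0 ≤ x → u x ≤ C * (x ^ α + 1)) (x : ℝ) :
    ENNReal.ofReal (max (u x) 0) ≤ ENNReal.ofReal C * (ENNReal.ofReal x ^ α + 1) := by
  rcases le_or_gt 0 x with hx | hx
  · have hxα : 0 ≤ x ^ α + 1 := by positivity
    calc ENNReal.ofReal (max (u x) 0) = ENNReal.ofReal (u x) := by simp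
      _ ≤ ENNReal.ofReal (C * (x ^ α + 1)) := ENNReal.ofReal_le_ofReal (hgrowth x hx)
      _ = ENNReal.ofReal C * (ENNReal.ofReal x ^ α + 1) := by
        rw [ENNReal.ofReal_mul' hxα, ENNReal.ofReal_add (by positivity) zero_le_one,
          ENNReal.ofReal_rpow_of_nonneg hx hα0, ENNReal.ofReal_one]
  · have : u x ≤ 0 := hu0 ▸ hmono hx.le
    simp [max_eq_right this]

section ChangeOfMeasure

variable {Ω : Type*} [MeasurableSpace Ω] {μ Q : Measure Ω}

theorem lintegral_rpow_ne_top_of_integrable {f : Ω → ℝ≥0∞} (hf : ∀ᵐ ω ∂μ, f ω ≠ ∞) {β : ℝ}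
    (hβ : 0 ≤ β) (hint : Integrable (fun ω => (f ω).toReal ^ β) μ) :
    ∫⁻ ω, f ω ^ β ∂μ ≠ ∞ := by
  have hfin : ∀ᵐ ω ∂μ, f ω ^ β ≠ ∞ := hf.mono fun ω hω => ENNReal.rpow_ne_top_of_nonneg hβ hω
  rw [lintegral_congr_ae (hfin.mono fun ω hω => (ENNReal.ofReal_toReal hω).symm)]
  simpa only [ENNReal.toReal_rpow] using hint.lintegral_lt_top.ne

theorem lintegral_rnDeriv_rpow_add_one [μ.HaveLebesgueDecomposition Q] (hμQ : μ ≪ Q) {β : ℝ}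
    (hβ : 0 ≤ β) : ∫⁻ ω, μ.rnDeriv Q ω ^ (1 + β) ∂Q = ∫⁻ ω, μ.rnDeriv Q ω ^ β ∂μ := by
  simp_rw [ENNReal.rpow_add_of_nonneg 1 β zero_le_one hβ, ENNReal.rpow_one]
  exact lintegral_rnDeriv_mul hμQ
    ((Measure.measurable_rnDeriv μ Q).pow_const β).aemeasurable

/-- Hölder's inequality with exponents `1 / (1 - α)` and `1 / α` applied to `dμ = (dμ/dQ) dQ`. -/
theorem lintegral_rpow_le_of_absolutelyContinuous [μ.HaveLebesgueDecomposition Q] (hμQ : μ ≪ Q)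
    {α : ℝ} (hα0 : 0 ≤ α) (hα1 : α < 1) {f : Ω → ℝ≥0∞} (hf : AEMeasurable f Q) :
    ∫⁻ ω, f ω ^ α ∂μ ≤
      (∫⁻ ω, μ.rnDeriv Q ω ^ (α / (1 - α)) ∂μ) ^ (1 - α) * (∫⁻ ω, f ω ∂Q) ^ α := by
  rcases hα0.eq_or_lt with rfl | hα
  · simp
  have h1α : 0 < 1 - α := sub_pos.2 hα1
  have hpq : Real.HolderConjugate (1 - α)⁻¹ α⁻¹ :=
    (Real.holderConjugate_iff).2 ⟨(one_lt_inv₀ h1α).2 (by linarith), by simp⟩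
  have hexp : (1 - α)⁻¹ = 1 + α / (1 - α) := by field_simp; ring
  calc ∫⁻ ω, f ω ^ α ∂μ = ∫⁻ ω, (μ.rnDeriv Q * fun ω => f ω ^ α) ω ∂Q :=
        (lintegral_rnDeriv_mul hμQ (hf.pow_const α)).symm
    _ ≤ (∫⁻ ω, μ.rnDeriv Q ω ^ (1 - α)⁻¹ ∂Q) ^ (1 / (1 - α)⁻¹) *
          (∫⁻ ω, (f ω ^ α) ^ α⁻¹ ∂Q) ^ (1 / α⁻¹) :=
        ENNReal.lintegral_mul_le_Lp_mul_Lq Q hpq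
          (Measure.measurable_rnDeriv μ Q).aemeasurable (hf.pow_const α)
    _ = _ := by
        simp_rw [one_div, inv_inv, ← ENNReal.rpow_mul, mul_inv_cancel₀ hα.ne', ENNReal.rpow_one]
        rw [hexp, lintegral_rnDeriv_rpow_add_one hμQ (div_nonneg hα0 h1α.le)]

theorem MeasureTheory.Measure.le_smul_of_rnDeriv_le [Q.HaveLebesgueDecomposition μ]
    (hQμ : Q ≪ μ) {c : ℝ≥0∞} (hc : ∀ᵐ ω ∂μ, Q.rnDeriv μ ω ≤ c) : Q ≤ c • μ := by
  calc Q = μ.withDensity (Q.rnDeriv μ) := (Measure.withDensity_rnDeriv_eq Q μ hQμ).symm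
    _ ≤ μ.withDensity fun _ => c := withDensity_mono hc
    _ = c • μ := withDensity_const c

theorem lintegral_ofReal_eq_lintegral_ofReal_neg {f : Ω → ℝ} (hf : Integrable f μ)
    (hf0 : ∫ ω, f ω ∂μ = 0) :
    ∫⁻ ω, ENNReal.ofReal (f ω) ∂μ = ∫⁻ ω, ENNReal.ofReal (-f ω) ∂μ := by
  rw [integral_eq_lintegral_pos_part_sub_lintegral_neg_part hf, sub_eq_zero] at hf0
  exact (ENNReal.toReal_eq_toReal_iff' hf.lintegral_lt_top.ne hf.neg.lintegral_lt_top.ne).1 hf0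

theorem lintegral_ofReal_le_mul_integral_add_one [IsProbabilityMeasure μ] {f g : Ω → ℝ} {a : ℝ}
    (ha : 0 ≤ a) (hg : Integrable g μ) (hg0 : 0 ≤ g) (hfg : ∀ ω, f ω ≤ a * (g ω + 1)) :
    ∫⁻ ω, ENNReal.ofReal (f ω) ∂μ ≤ ENNReal.ofReal a * (ENNReal.ofReal (∫ ω, g ω ∂μ) + 1) := by
  calc ∫⁻ ω, ENNReal.ofReal (f ω) ∂μ
      ≤ ∫⁻ ω, ENNReal.ofReal a * (ENNReal.ofReal (g ω) + 1) ∂μ := by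
        refine lintegral_mono fun ω => (ENNReal.ofReal_le_ofReal (hfg ω)).trans_eq ?_
        rw [ENNReal.ofReal_mul ha, ENNReal.ofReal_add (hg0 ω) zero_le_one, ENNReal.ofReal_one]
    _ = ENNReal.ofReal a * (ENNReal.ofReal (∫ ω, g ω ∂μ) + 1) := by
        rw [lintegral_const_mul' _ _ ENNReal.ofReal_ne_top, lintegral_add_right _ measurable_const,
          ← ofReal_integral_eq_lintegral_ofReal hg (ae_of_all _ hg0)]
        simp

end ChangeOfMeasure

theorem ENNReal.mul_mul_rpow_add_one_le {α : ℝ} (hα0 : 0 ≤ α) (hα1 : α ≤ 1) (C N d x : ℝ≥0∞) :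
    C * (N * (d * (x + 1)) ^ α + 1) ≤ C * (N * d ^ α + 1) * (x ^ α + 1) := by
  have hsub : (d * (x + 1)) ^ α ≤ d ^ α * (x ^ α + 1) := by
    rw [ENNReal.mul_rpow_of_nonneg _ _ hα0]
    gcongr
    simpa using ENNReal.rpow_add_le_add_rpow x 1 hα0 hα1
  calc C * (N * (d * (x + 1)) ^ α + 1) ≤ C * (N * d ^ α * (x ^ α + 1) + (x ^ α + 1)) := by
        rw [mul_assoc N]
        gcongr
        exact le_add_self
    _ = C * (N * d ^ α + 1) * (x ^ α + 1) := by ring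

theorem stmt14_general {Ω : Type*} [MeasurableSpace Ω] (μ : Measure Ω) [IsProbabilityMeasure μ]
    (Q : Measure Ω) [IsProbabilityMeasure Q] (hQP : Q ≪ μ) (hPQ : μ ≪ Q)
    (hbdd : ∃ c : NNReal, ∀ᵐ ω ∂μ, Q.rnDeriv μ ω ≤ c)
    (α : ℝ) (hα0 : 0 ≤ α) (hα1 : α < 1)
    (hmom : Integrable (fun ω => (μ.rnDeriv Q ω).toReal ^ (α / (1 - α))) μ)
    (u : ℝ → ℝ) (hconc : ConcaveOn ℝ Set.univ u) (hmono : Monotone u)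
    (hnc : ¬ ∃ k : ℝ, ∀ x : ℝ, u x = k) (hu0 : u 0 = 0)
    (C₁ : ℝ)
    (hgrowth : ∀ x : ℝ, 0 ≤ x → u x ≤ C₁ * (x ^ α + 1)) :
    ∃ C₄ : ℝ, 0 ≤ C₄ ∧
      ∀ V : Ω → ℝ, AEMeasurable V μ → Integrable V Q → ∫ ω, V ω ∂Q = 0 →
        Integrable (fun ω => max (-u (V ω)) 0) μ →
        ∫⁻ ω, ENNReal.ofReal (max (u (V ω)) 0) ∂μ ≤
          ENNReal.ofReal (C₄ * (∫ ω, max (-u (V ω)) 0 ∂μ) ^ α + C₄) := by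
  obtain ⟨c, hc⟩ := hbdd
  obtain ⟨a, ha, hneg⟩ := hconc.exists_neg_le_mul_negPart_add_one hmono hnc hu0
  set N := (∫⁻ ω, μ.rnDeriv Q ω ^ (α / (1 - α)) ∂μ) ^ (1 - α)
  have hN : N ≠ ∞ := ENNReal.rpow_ne_top_of_nonneg (sub_nonneg.2 hα1.le) <|
    lintegral_rpow_ne_top_of_integrable (hPQ.ae_le (Measure.rnDeriv_ne_top μ Q))
      (div_nonneg hα0 (sub_nonneg.2 hα1.le)) hmom
  set k := ENNReal.ofReal C₁ * (N * ((c : ℝ≥0∞) * ENNReal.ofReal a) ^ α + 1)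
  have hk : k ≠ ∞ := by finiteness
  refine ⟨k.toReal, ENNReal.toReal_nonneg, fun V _ hVQ hV0 hI => ?_⟩
  set I := ∫ ω, max (-u (V ω)) 0 ∂μ
  have hI0 : 0 ≤ I := integral_nonneg fun ω => le_max_right _ _
  calc ∫⁻ ω, ENNReal.ofReal (max (u (V ω)) 0) ∂μ
      ≤ ∫⁻ ω, ENNReal.ofReal C₁ * (ENNReal.ofReal (V ω) ^ α + 1) ∂μ :=
        lintegral_mono fun ω => ofReal_max_le_of_growth hmono hu0 hα0 hgrowth (V ω)
    _ = ENNReal.ofReal C₁ * (∫⁻ ω, ENNReal.ofReal (V ω) ^ α ∂μ + 1) := by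
        rw [lintegral_const_mul' _ _ ENNReal.ofReal_ne_top, lintegral_add_right _ measurable_const]
        simp
    _ ≤ ENNReal.ofReal C₁ * (N * (∫⁻ ω, ENNReal.ofReal (V ω) ∂Q) ^ α + 1) := by
        gcongr
        exact lintegral_rpow_le_of_absolutelyContinuous hPQ hα0 hα1
          hVQ.aemeasurable.ennreal_ofReal
    _ = ENNReal.ofReal C₁ * (N * (∫⁻ ω, ENNReal.ofReal (-V ω) ∂Q) ^ α + 1) := by
        rw [lintegral_ofReal_eq_lintegral_ofReal_neg hVQ hV0]
    _ ≤ ENNReal.ofReal C₁ * (N * (c * ∫⁻ ω, ENNReal.ofReal (-V ω) ∂μ) ^ α + 1) := by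
        gcongr
        rw [← smul_eq_mul, ← lintegral_smul_measure]
        exact lintegral_mono' (Measure.le_smul_of_rnDeriv_le hQP hc) le_rfl
    _ ≤ ENNReal.ofReal C₁ * (N * (c * (ENNReal.ofReal a * (ENNReal.ofReal I + 1))) ^ α + 1) := by
        gcongr
        exact lintegral_ofReal_le_mul_integral_add_one ha hI (fun ω => le_max_right _ _)
          fun ω => hneg (V ω)
    _ ≤ k * (ENNReal.ofReal I ^ α + 1) := by
        rw [← mul_assoc]
        exact ENNReal.mul_mul_rpow_add_one_le hα0 hα1.le _ _ _ _
    _ = ENNReal.ofReal (k.toReal * I ^ α + k.toReal) := by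
        rw [ENNReal.ofReal_add (by positivity) ENNReal.toReal_nonneg,
          ENNReal.ofReal_mul ENNReal.toReal_nonneg, ENNReal.ofReal_toReal hk,
          ← ENNReal.ofReal_rpow_of_nonneg hI0 hα0]
        ring

theorem stmt14 {Ω : Type*} [MeasurableSpace Ω] (μ : Measure Ω) [IsProbabilityMeasure μ]
    (Q : Measure Ω) [IsProbabilityMeasure Q] (hQP : Q ≪ μ) (hPQ : μ ≪ Q)
    (hbdd : ∃ c : NNReal, ∀ᵐ ω ∂μ, Q.rnDeriv μ ω ≤ c)
    (α : ℝ) (hα0 : 0 ≤ α) (hα1 : α < 1)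
    (hmom : Integrable (fun ω => (μ.rnDeriv Q ω).toReal ^ (α / (1 - α))) μ)
    (u : ℝ → ℝ) (hconc : ConcaveOn ℝ Set.univ u) (hmono : Monotone u)
    (hnc : ¬ ∃ k : ℝ, ∀ x : ℝ, u x = k) (hu0 : u 0 = 0)
    (C₁ : ℝ) (hC₁ : 0 ≤ C₁)
    (hgrowth : ∀ x : ℝ, 0 ≤ x → u x ≤ C₁ * (x ^ α + 1)) :
    ∃ C₄ : ℝ, 0 ≤ C₄ ∧
      ∀ V : Ω → ℝ, AEMeasurable V μ → Integrable V Q → ∫ ω, V ω ∂Q = 0 →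
        Integrable (fun ω => max (-u (V ω)) 0) μ →
        ∫⁻ ω, ENNReal.ofReal (max (u (V ω)) 0) ∂μ ≤
          ENNReal.ofReal (C₄ * (∫ ω, max (-u (V ω)) 0 ∂μ) ^ α + C₄) :=
  stmt14_general μ Q hQP hPQ hbdd α hα0 hα1 hmom u hconc hmono hnc hu0 C₁ hgrowth
end
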